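/- arXiv:2005.00855 — 3 statements merged into one kernel-verified Lean document; each statement's English description precedes it below -/
import Mathlib

section
/- Let a ∈ X and let P ∈ ℚ⟨X⟩ be a polynomial whose coefficient of the word a^k is zero for every k ≥ 0. If [ι a, P] = 0 (i.e., ι a · P = P · ι a), then P = 0. -/
/-!
Setting: `ℚ⟨X⟩ = FreeAlgebra ℚ X`, the free associative `ℚ`-algebra on a type `X` of
non-commuting variables, with the commutator bracket `⁅P,Q⁆ = P*Q - Q*P` and canonical
inclusion `ι = FreeAlgebra.ι ℚ`.  The words (elements of `FreeMonoid X`) form a `ℚ`-basis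
`FreeAlgebra.basisFreeMonoid ℚ X` of `ℚ⟨X⟩`.
-/

/-- The right-normed bracketing of a word:
`[ι x₁,[ι x₂,[…,[ι x_{n−1}, ι xₙ]…]]]`, with the empty word mapped to `0`. -/
noncomputable def rword {X : Type*} : List X → FreeAlgebra ℚ X
  | [] => 0
  | [x] => FreeAlgebra.ι ℚ x
  | x :: y :: ys => ⁅FreeAlgebra.ι ℚ x, rword (y :: ys)⁆

/-- The right-normed bracketing map `r : ℚ⟨X⟩ → ℚ⟨X⟩`: the unique `ℚ`-linear map sending the
basis word `w₁w₂⋯wₙ` to `[ι w₁,[ι w₂,[…,[ι w_{n−1}, ι wₙ]…]]]` (and the empty word `1` to `0`,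
and a single letter `x` to `ι x`). -/
noncomputable def rmap (X : Type*) : FreeAlgebra ℚ X →ₗ[ℚ] FreeAlgebra ℚ X :=
  (FreeAlgebra.basisFreeMonoid ℚ X).constr ℚ fun w => rword w.toList

/-- The coefficient of the word `w` in `P`, with respect to the basis of words of `ℚ⟨X⟩`. -/
noncomputable def coeffWord {X : Type*} (P : FreeAlgebra ℚ X) (w : FreeMonoid X) : ℚ :=
  (FreeAlgebra.basisFreeMonoid ℚ X).repr P w

section

attribute [local instance 100] LieRing.ofAssociativeRing

/-- `P` is a Lie polynomial: it belongs to the Lie subalgebra of `ℚ⟨X⟩` (under the commutator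
bracket) generated by the image of `ι`, i.e. the smallest `ℚ`-subspace of `ℚ⟨X⟩` containing
`ι(X)` and closed under commutators. -/
def IsLiePolynomial {X : Type*} (P : FreeAlgebra ℚ X) : Prop :=
  P ∈ LieSubalgebra.lieSpan ℚ (FreeAlgebra ℚ X) (Set.range (FreeAlgebra.ι ℚ))

end

/-- `P` is homogeneous of degree `n`: a `ℚ`-linear combination of words of length `n`. -/
def IsHomogeneous {X : Type*} (n : ℕ) (P : FreeAlgebra ℚ X) : Prop :=
  P ∈ Submodule.span ℚ
    ((fun w : List X => (w.map (FreeAlgebra.ι ℚ)).prod) '' {w : List X | w.length = n})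

/-!
Work in the monoid algebra on the free monoid and write `c w` for the coefficient of a word `w`.
If `a` commutes with `f`, comparing the coefficients of `a w a` in `a f = f a` gives
`c (a w) = c (w a)`, and comparing those of `x w a` for a letter `x ≠ a` gives `c (x w) = 0`.
So in `c (w a^k)` a leading `a` of `w` can be moved to the end, and after finitely many moves
either a leading letter other than `a` kills the coefficient or only `c (a^k) = 0` is left.
-/

open MonoidAlgebra

theorem FreeMonoid.ofList_replicate {X : Type*} (k : ℕ) (a : X) :
    FreeMonoid.ofList (List.replicate k a) = FreeMonoid.of a ^ k := by
  induction k with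
  | zero => rfl
  | succ k ih => rw [List.replicate_succ, FreeMonoid.ofList_cons, ih, pow_succ']

namespace MonoidAlgebra

variable {R X : Type*} [Semiring R] {a : X} {f : R[FreeMonoid X]}

theorem coeff_of_mul_eq_coeff_mul_of (hf : Commute (single (FreeMonoid.of a) 1) f)
    (w : FreeMonoid X) :
    f.coeff (FreeMonoid.of a * w) = f.coeff (w * FreeMonoid.of a) :=
  calc f.coeff (FreeMonoid.of a * w)
      = (f * single (FreeMonoid.of a) 1).coeff (FreeMonoid.of a * w * FreeMonoid.of a) := by
        rw [coeff_mul_single_mul, mul_one]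
    _ = (single (FreeMonoid.of a) 1 * f).coeff (FreeMonoid.of a * (w * FreeMonoid.of a)) := by
        rw [hf.eq, mul_assoc]
    _ = f.coeff (w * FreeMonoid.of a) := by rw [coeff_single_mul_mul, one_mul]

theorem coeff_of_mul_eq_zero (hf : Commute (single (FreeMonoid.of a) 1) f) {x : X}
    (hx : x ≠ a) (w : FreeMonoid X) : f.coeff (FreeMonoid.of x * w) = 0 :=
  calc f.coeff (FreeMonoid.of x * w)
      = (f * single (FreeMonoid.of a) 1).coeff (FreeMonoid.of x * w * FreeMonoid.of a) := by
        rw [coeff_mul_single_mul, mul_one]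
    _ = (single (FreeMonoid.of a) 1 * f).coeff (FreeMonoid.of x * w * FreeMonoid.of a) := by
        rw [hf.eq]
    _ = 0 := coeff_single_mul_of_forall_mul_ne _ _ fun d hd ↦
        hx (List.cons.inj (congrArg FreeMonoid.toList hd)).1.symm

theorem eq_zero_of_commute_single_of (hf : Commute (single (FreeMonoid.of a) 1) f)
    (hpow : ∀ k : ℕ, f.coeff (FreeMonoid.of a ^ k) = 0) : f = 0 := by
  suffices ∀ w k, f.coeff (w * FreeMonoid.of a ^ k) = 0 by
    ext w
    simpa using this w 0
  intro w
  induction w using FreeMonoid.inductionOn' with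
  | one => simpa using hpow
  | of_mul x w ih =>
    intro k
    rcases eq_or_ne x a with rfl | hx
    · rw [mul_assoc, coeff_of_mul_eq_coeff_mul_of hf, mul_assoc, ← pow_succ]
      exact ih (k + 1)
    · rw [mul_assoc]
      exact coeff_of_mul_eq_zero hf hx _

end MonoidAlgebra

theorem coeffWord_eq_coeff {X : Type*} (P : FreeAlgebra ℚ X) (w : FreeMonoid X) :
    coeffWord P w = (FreeAlgebra.equivMonoidAlgebraFreeMonoid P).coeff w := by
  simp [coeffWord, FreeAlgebra.basisFreeMonoid]

/-- If the coefficient of `a^k` in `P` vanishes for every `k ≥ 0` and `[ι a, P] = 0`,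
then `P = 0`. -/
theorem stmt_0 {X : Type*} (a : X) (P : FreeAlgebra ℚ X)
    (hP : ∀ k : ℕ, coeffWord P (FreeMonoid.ofList (List.replicate k a)) = 0)
    (h : ⁅FreeAlgebra.ι ℚ a, P⁆ = 0) :
    P = 0 := by
  let e := FreeAlgebra.equivMonoidAlgebraFreeMonoid (R := ℚ) (X := X)
  have hcomm : Commute (FreeAlgebra.ι ℚ a) P := sub_eq_zero.mp (by rwa [← Ring.lie_def])
  have he : e (FreeAlgebra.ι ℚ a) = single (FreeMonoid.of a) 1 := by
    simp [e, FreeAlgebra.equivMonoidAlgebraFreeMonoid]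
  have hzero : e P = 0 := by
    refine eq_zero_of_commute_single_of (he ▸ hcomm.map e) fun k ↦ ?_
    rw [← FreeMonoid.ofList_replicate, ← coeffWord_eq_coeff]
    exact hP k
  exact e.map_eq_zero_iff.mp hzero
end

section
/- Let a ∈ X and let P ∈ ℚ⟨X⟩ be a polynomial whose coefficient of the word a^k is zero for every k ≥ 0. If the commutator [ι a, P] is a Lie polynomial, then P itself is a Lie polynomial. -/
attribute [local instance 100] LieRing.ofAssociativeRing

/-!
Bracketing with `ι a` raises degrees by one and the homogeneous components of a Lie
polynomial are Lie polynomials, so it suffices to treat a homogeneous `P` of degree `n`;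
degrees `0` and `1` are immediate. For `n ≥ 2` we use the Dynkin–Specht–Wever theorem: the
right-normed bracketing `r` satisfies `r Q = n • Q` for Lie polynomials `Q` of degree `n`, and
`r (U * V) = ρ U (r V)` for `V` of positive degree, where `ρ` is the algebra map extending
`x ↦ ad (ι x)`. The centralizer of `ι a` is spanned by the powers of `a`, and a Lie polynomial
has no `a^k`-coefficient for `k ≠ 1`. Hence the Lie polynomial `ρ P (ι a) + ⁅ι a, P⁆` of degree
`n + 1`, which commutes with `ι a`, vanishes. Expanding `r ⁅ι a, P⁆ = (n + 1) • ⁅ι a, P⁆` then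
shows that `r P - n • P` commutes with `ι a`; its `a^n`-coefficient is zero by hypothesis, so
`P = n⁻¹ • r P` is a Lie polynomial.
-/
open FreeAlgebra

namespace FreeAlgebra

variable {R X : Type*} [CommSemiring R]

theorem basisFreeMonoid_apply (w : FreeMonoid X) :
    basisFreeMonoid R X w = (w.toList.map (ι R)).prod := by
  simp [basisFreeMonoid, equivMonoidAlgebraFreeMonoid, MonoidAlgebra.lift_single,
    FreeMonoid.lift_apply]

theorem basisFreeMonoid_mul (u v : FreeMonoid X) :
    basisFreeMonoid R X u * basisFreeMonoid R X v = basisFreeMonoid R X (u * v) := by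
  simp [basisFreeMonoid_apply]

theorem basisFreeMonoid_of (x : X) : basisFreeMonoid R X (.of x) = ι R x := by
  simp [basisFreeMonoid_apply]

theorem basisFreeMonoid_ofList (l : List X) :
    basisFreeMonoid R X (.ofList l) = (l.map (ι R)).prod := by
  simp [basisFreeMonoid_apply]

theorem repr_ι_mul (x : X) (P : FreeAlgebra R X) :
    (basisFreeMonoid R X).repr (ι R x * P) =
      ((basisFreeMonoid R X).repr P).mapDomain (FreeMonoid.of x * ·) := by
  suffices (basisFreeMonoid R X).repr.toLinearMap ∘ₗ LinearMap.mulLeft R (ι R x) =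
      Finsupp.lmapDomain R R (FreeMonoid.of x * ·) ∘ₗ (basisFreeMonoid R X).repr.toLinearMap
    from LinearMap.congr_fun this P
  refine (basisFreeMonoid R X).ext fun w => ?_
  simp [← basisFreeMonoid_of, basisFreeMonoid_mul]

theorem repr_mul_ι (x : X) (P : FreeAlgebra R X) :
    (basisFreeMonoid R X).repr (P * ι R x) =
      ((basisFreeMonoid R X).repr P).mapDomain (· * FreeMonoid.of x) := by
  suffices (basisFreeMonoid R X).repr.toLinearMap ∘ₗ LinearMap.mulRight R (ι R x) =
      Finsupp.lmapDomain R R (· * FreeMonoid.of x) ∘ₗ (basisFreeMonoid R X).repr.toLinearMap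
    from LinearMap.congr_fun this P
  refine (basisFreeMonoid R X).ext fun w => ?_
  simp [← basisFreeMonoid_of, basisFreeMonoid_mul]

end FreeAlgebra

theorem List.eq_replicate_or_eq_replicate_append_cons_ne {α : Type*} (a : α) (l : List α) :
    (∃ k, l = replicate k a) ∨ ∃ j x v, x ≠ a ∧ l = replicate j a ++ x :: v := by
  induction l with
  | nil => exact .inl ⟨0, rfl⟩
  | cons y t ih =>
    by_cases hy : y = a
    · subst hy
      rcases ih with ⟨k, rfl⟩ | ⟨j, x, v, hx, rfl⟩
      · exact .inl ⟨k + 1, rfl⟩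
      · exact .inr ⟨j + 1, x, v, hx, rfl⟩
    · exact .inr ⟨0, y, t, hy, rfl⟩

section Coefficients

variable {X : Type*}

theorem coeffWord_basisFreeMonoid (u w : FreeMonoid X) [Decidable (u = w)] :
    coeffWord (basisFreeMonoid ℚ X u) w = if u = w then 1 else 0 :=
  (basisFreeMonoid ℚ X).repr_self_apply u w

theorem coeffWord_eq_coord (P : FreeAlgebra ℚ X) (w : FreeMonoid X) :
    coeffWord P w = (basisFreeMonoid ℚ X).coord w P :=
  rfl

theorem ext_coeffWord {P Q : FreeAlgebra ℚ X} (h : ∀ w, coeffWord P w = coeffWord Q w) :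
    P = Q :=
  (basisFreeMonoid ℚ X).ext_elem_iff.mpr h

theorem coeffWord_ι_mul_of_mul (x : X) (P : FreeAlgebra ℚ X) (w : FreeMonoid X) :
    coeffWord (ι ℚ x * P) (.of x * w) = coeffWord P w := by
  rw [coeffWord, repr_ι_mul, Finsupp.mapDomain_apply (mul_right_injective _), coeffWord]

theorem coeffWord_ι_mul_of_mul_of_ne {x y : X} (hyx : y ≠ x) (P : FreeAlgebra ℚ X)
    (w : FreeMonoid X) : coeffWord (ι ℚ x * P) (.of y * w) = 0 := by
  rw [coeffWord, repr_ι_mul, Finsupp.mapDomain_of_notMem_range]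
  rintro ⟨u, hu⟩
  have := congrArg FreeMonoid.toList hu
  simp only [FreeMonoid.toList_mul, FreeMonoid.toList_of, List.singleton_append,
    List.cons.injEq] at this
  exact hyx this.1.symm

theorem coeffWord_mul_ι_mul_of (x : X) (P : FreeAlgebra ℚ X) (w : FreeMonoid X) :
    coeffWord (P * ι ℚ x) (w * .of x) = coeffWord P w := by
  rw [coeffWord, repr_mul_ι, Finsupp.mapDomain_apply (mul_left_injective _), coeffWord]

end Coefficients

section Homogeneous

variable {X : Type*}

theorem isHomogeneous_iff_coeffWord {n : ℕ} {P : FreeAlgebra ℚ X} :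
    IsHomogeneous n P ↔ ∀ w, coeffWord P w ≠ 0 → w.length = n := by
  have hwords : (fun l : List X => (l.map (ι ℚ)).prod) '' {l | l.length = n}
      = basisFreeMonoid ℚ X '' {w | w.length = n} := by
    ext
    exact ⟨fun ⟨l, hl, e⟩ => ⟨.ofList l, hl, (basisFreeMonoid_ofList l).trans e⟩,
      fun ⟨w, hw, e⟩ => ⟨w.toList, hw, by rw [← e, basisFreeMonoid_apply]⟩⟩
  rw [IsHomogeneous, hwords, Module.Basis.mem_span_image]
  simp [Set.subset_def, coeffWord]

theorem IsHomogeneous.coeffWord_eq_zero {n : ℕ} {P : FreeAlgebra ℚ X} (hP : IsHomogeneous n P)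
    {w : FreeMonoid X} (hw : w.length ≠ n) : coeffWord P w = 0 :=
  not_imp_comm.mp (isHomogeneous_iff_coeffWord.mp hP w) hw

theorem isHomogeneous_zero (n : ℕ) : IsHomogeneous n (0 : FreeAlgebra ℚ X) :=
  Submodule.zero_mem _

theorem IsHomogeneous.add {n : ℕ} {P Q : FreeAlgebra ℚ X} (hP : IsHomogeneous n P)
    (hQ : IsHomogeneous n Q) : IsHomogeneous n (P + Q) :=
  Submodule.add_mem _ hP hQ

theorem IsHomogeneous.sub {n : ℕ} {P Q : FreeAlgebra ℚ X} (hP : IsHomogeneous n P)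
    (hQ : IsHomogeneous n Q) : IsHomogeneous n (P - Q) :=
  Submodule.sub_mem _ hP hQ

theorem IsHomogeneous.smul {n : ℕ} {P : FreeAlgebra ℚ X} (hP : IsHomogeneous n P) (c : ℚ) :
    IsHomogeneous n (c • P) :=
  Submodule.smul_mem _ c hP

theorem isHomogeneous_ι (x : X) : IsHomogeneous 1 (ι ℚ x) :=
  Submodule.subset_span ⟨[x], rfl, by simp⟩

theorem IsHomogeneous.mul {m n : ℕ} {P Q : FreeAlgebra ℚ X} (hP : IsHomogeneous m P)
    (hQ : IsHomogeneous n Q) : IsHomogeneous (m + n) (P * Q) := by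
  have hPQ := Submodule.mul_mem_mul hP hQ
  rw [Submodule.span_mul_span] at hPQ
  refine Submodule.span_mono ?_ hPQ
  rintro _ ⟨_, ⟨u, hu, rfl⟩, _, ⟨v, hv, rfl⟩, rfl⟩
  exact ⟨u ++ v, by simp_all, by simp⟩

theorem IsHomogeneous.lie {m n : ℕ} {P Q : FreeAlgebra ℚ X} (hP : IsHomogeneous m P)
    (hQ : IsHomogeneous n Q) : IsHomogeneous (m + n) ⁅P, Q⁆ := by
  rw [Ring.lie_def]
  exact (hP.mul hQ).sub (add_comm m n ▸ hQ.mul hP)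

theorem isLiePolynomial_of_isHomogeneous_one {P : FreeAlgebra ℚ X} (hP : IsHomogeneous 1 P) :
    IsLiePolynomial P := by
  refine (Submodule.span_le
    (p := (LieSubalgebra.lieSpan ℚ (FreeAlgebra ℚ X) (Set.range (ι ℚ))).toSubmodule).mpr ?_) hP
  rintro _ ⟨l, hl, rfl⟩
  obtain ⟨x, rfl⟩ := List.length_eq_one_iff.mp hl
  simp only [List.map_singleton, List.prod_singleton]
  exact LieSubalgebra.subset_lieSpan ⟨x, rfl⟩

noncomputable def homogComponent (n : ℕ) : FreeAlgebra ℚ X →ₗ[ℚ] FreeAlgebra ℚ X :=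
  (basisFreeMonoid ℚ X).constr ℚ fun w => if w.length = n then basisFreeMonoid ℚ X w else 0

theorem homogComponent_basisFreeMonoid (n : ℕ) (w : FreeMonoid X) :
    homogComponent n (basisFreeMonoid ℚ X w) =
      if w.length = n then basisFreeMonoid ℚ X w else 0 :=
  (basisFreeMonoid ℚ X).constr_basis ℚ _ w

theorem coeffWord_homogComponent (n : ℕ) (P : FreeAlgebra ℚ X) (w : FreeMonoid X) :
    coeffWord (homogComponent n P) w = if w.length = n then coeffWord P w else 0 := by
  classical
  suffices hcoord : (basisFreeMonoid ℚ X).coord w ∘ₗ homogComponent n =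
      if w.length = n then (basisFreeMonoid ℚ X).coord w else 0 by
    rw [coeffWord_eq_coord, coeffWord_eq_coord, ← LinearMap.comp_apply, hcoord]
    split_ifs <;> rfl
  refine (basisFreeMonoid ℚ X).ext fun u => ?_
  by_cases hu : u.length = n <;> by_cases hw : w.length = n <;>
    simp [homogComponent_basisFreeMonoid, Finsupp.single_apply, hu, hw] <;>
    rintro rfl <;> contradiction

theorem isHomogeneous_homogComponent (n : ℕ) (P : FreeAlgebra ℚ X) :
    IsHomogeneous n (homogComponent n P) :=
  isHomogeneous_iff_coeffWord.mpr fun w hw => by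
    rw [coeffWord_homogComponent] at hw
    exact of_not_not fun hn => hw (if_neg hn)

theorem homogComponent_of_isHomogeneous {m n : ℕ} {P : FreeAlgebra ℚ X}
    (hP : IsHomogeneous n P) : homogComponent m P = if n = m then P else 0 := by
  refine ext_coeffWord fun w => ?_
  rw [coeffWord_homogComponent]
  by_cases hnm : n = m
  · subst hnm
    rw [if_pos rfl, ite_eq_left_iff]
    exact fun hw => (hP.coeffWord_eq_zero hw).symm
  · rw [if_neg hnm, coeffWord_eq_coord 0, map_zero, ite_eq_right_iff]
    exact fun hw => hP.coeffWord_eq_zero (hw ▸ Ne.symm hnm)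

theorem sum_homogComponent (P : FreeAlgebra ℚ X) :
    ∑ n ∈ ((basisFreeMonoid ℚ X).repr P).support.image FreeMonoid.length,
      homogComponent n P = P := by
  refine ext_coeffWord fun w => ?_
  rw [coeffWord_eq_coord, map_sum]
  simp only [← coeffWord_eq_coord, coeffWord_homogComponent,
    Finset.sum_ite_eq, Finset.mem_image]
  split_ifs with hw
  · rfl
  · by_contra hP
    exact hw ⟨w, Finsupp.mem_support_iff.mpr (Ne.symm hP), rfl⟩

theorem homogComponent_lie_ι (x : X) (n : ℕ) (P : FreeAlgebra ℚ X) :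
    homogComponent (n + 1) ⁅ι ℚ x, P⁆ = ⁅ι ℚ x, homogComponent n P⁆ := by
  suffices homogComponent (n + 1) ∘ₗ LieAlgebra.ad ℚ _ (ι ℚ x) =
      LieAlgebra.ad ℚ _ (ι ℚ x) ∘ₗ homogComponent n from LinearMap.congr_fun this P
  refine (basisFreeMonoid ℚ X).ext fun w => ?_
  by_cases hw : w.length = n <;>
    simp [Ring.lie_def, ← basisFreeMonoid_of, basisFreeMonoid_mul, homogComponent_basisFreeMonoid,
      hw, add_comm 1]

end Homogeneous

section PowersOfLetter

variable {X : Type*} (a : X)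

theorem coeffWord_replicate_mul_comm (P Q : FreeAlgebra ℚ X) (k : ℕ) :
    coeffWord (P * Q) (.ofList (List.replicate k a)) =
      coeffWord (Q * P) (.ofList (List.replicate k a)) := by
  classical
  suffices (LinearMap.mul ℚ _).compr₂
      ((basisFreeMonoid ℚ X).coord (.ofList (List.replicate k a))) =
        (LinearMap.mul ℚ _).flip.compr₂ ((basisFreeMonoid ℚ X).coord _)
    from LinearMap.congr_fun₂ this P Q
  refine (basisFreeMonoid ℚ X).ext fun u => (basisFreeMonoid ℚ X).ext fun v => ?_
  have hswap : u * v = .ofList (List.replicate k a) ↔ v * u = .ofList (List.replicate k a) := by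
    rw [← FreeMonoid.toList.injective.eq_iff, ← FreeMonoid.toList.injective.eq_iff]
    simp only [FreeMonoid.toList_mul, FreeMonoid.toList_ofList,
      List.append_eq_replicate_iff]
    constructor <;> rintro ⟨hk, hu, hv⟩ <;> exact ⟨by omega, hv, hu⟩
  simp [basisFreeMonoid_mul, Finsupp.single_apply, hswap]

theorem coeffWord_replicate_lie (P Q : FreeAlgebra ℚ X) (k : ℕ) :
    coeffWord ⁅P, Q⁆ (.ofList (List.replicate k a)) = 0 := by
  rw [Ring.lie_def, coeffWord_eq_coord, map_sub, ← coeffWord_eq_coord, ← coeffWord_eq_coord,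
    coeffWord_replicate_mul_comm, sub_self]

theorem IsLiePolynomial.coeffWord_replicate_eq_zero {Q : FreeAlgebra ℚ X}
    (hQ : IsLiePolynomial Q) {k : ℕ} (hk : k ≠ 1) :
    coeffWord Q (.ofList (List.replicate k a)) = 0 := by
  induction hQ using LieSubalgebra.lieSpan_induction with
  | mem _ hx =>
    obtain ⟨x, rfl⟩ := hx
    classical
    rw [← basisFreeMonoid_of, coeffWord_basisFreeMonoid, if_neg]
    intro h
    exact hk (by simpa [FreeMonoid.length] using (congrArg FreeMonoid.length h).symm)
  | zero => simp [coeffWord]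
  | add _ _ _ _ hP hQ => simp_all [coeffWord]
  | smul _ _ _ hP => simp_all [coeffWord]
  | lie P Q _ _ _ _ => exact coeffWord_replicate_lie a P Q k

/-- Comparing coefficients of `w * a` in `ι a * Q = Q * ι a` moves a leading `a` of a word to its
end, until the word starts with a letter `x ≠ a`, where the coefficient in `ι a * Q` is zero. -/
theorem eq_zero_of_commute_ι {Q : FreeAlgebra ℚ X} (hQ : Commute (ι ℚ a) Q)
    (hpow : ∀ k, coeffWord Q (.ofList (List.replicate k a)) = 0) : Q = 0 := by
  have hshift (w : FreeMonoid X) : coeffWord (ι ℚ a * Q) (w * .of a) = coeffWord Q w := by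
    rw [hQ.eq, coeffWord_mul_ι_mul_of]
  have hcons (j : ℕ) : ∀ x v, x ≠ a →
      coeffWord Q (.ofList (List.replicate j a ++ x :: v)) = 0 := by
    induction j with
    | zero =>
      intro x v hx
      have hword : FreeMonoid.ofList (List.replicate 0 a ++ x :: v) * .of a =
          .of x * .ofList (v ++ [a]) := rfl
      rw [← hshift, hword, coeffWord_ι_mul_of_mul_of_ne hx]
    | succ j ih =>
      intro x v hx
      have hword : FreeMonoid.ofList (List.replicate (j + 1) a ++ x :: v) * .of a =
          .of a * .ofList (List.replicate j a ++ x :: (v ++ [a])) := by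
        apply FreeMonoid.toList.injective
        simp [List.replicate_succ]
      rw [← hshift, hword, coeffWord_ι_mul_of_mul, ih x _ hx]
  refine ext_coeffWord fun w => ?_
  rw [coeffWord_eq_coord 0, map_zero, ← FreeMonoid.ofList_toList w]
  rcases w.toList.eq_replicate_or_eq_replicate_append_cons_ne a with ⟨k, hk⟩ | ⟨j, x, v, hx, hl⟩
  · rw [hk, hpow]
  · rw [hl, hcons j x v hx]

theorem IsLiePolynomial.eq_zero_of_lie_ι_eq_zero {n : ℕ} {Q : FreeAlgebra ℚ X}
    (hQ : IsLiePolynomial Q) (hQn : IsHomogeneous n Q) (hn : n ≠ 1) (hcomm : ⁅ι ℚ a, Q⁆ = 0) :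
    Q = 0 := by
  refine eq_zero_of_commute_ι a (commute_iff_lie_eq.mpr hcomm) fun k => ?_
  rcases eq_or_ne k 1 with rfl | hk
  · exact hQn.coeffWord_eq_zero (by simpa [FreeMonoid.length] using hn.symm)
  · exact hQ.coeffWord_replicate_eq_zero a hk

end PowersOfLetter

section RightNormedBracketing

variable {X : Type*}

/-- `adLift (x₁ ⋯ xₙ) = ad (ι x₁) ∘ ⋯ ∘ ad (ι xₙ)`, the map `ρ` of the introduction. -/
noncomputable def adLift : FreeAlgebra ℚ X →ₐ[ℚ] Module.End ℚ (FreeAlgebra ℚ X) :=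
  lift ℚ fun x => LieAlgebra.ad ℚ _ (ι ℚ x)

theorem adLift_ι (x : X) (Q : FreeAlgebra ℚ X) : adLift (ι ℚ x) Q = ⁅ι ℚ x, Q⁆ := by
  simp [adLift]

theorem adLift_eq_ad {Q : FreeAlgebra ℚ X} (hQ : IsLiePolynomial Q) :
    adLift Q = LieAlgebra.ad ℚ _ Q := by
  induction hQ using LieSubalgebra.lieSpan_induction with
  | mem _ hx =>
    obtain ⟨x, rfl⟩ := hx
    exact LinearMap.ext (adLift_ι x)
  | zero => simp
  | add _ _ _ _ hP hQ => simp [hP, hQ]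
  | smul _ _ _ hP => simp [hP]
  | lie P Q _ _ hP hQ =>
    rw [← AlgHom.toLieHom_apply, LieHom.map_lie, AlgHom.toLieHom_apply, AlgHom.toLieHom_apply,
      hP, hQ, LieHom.map_lie]

theorem isLiePolynomial_adLift (P : FreeAlgebra ℚ X) {Q : FreeAlgebra ℚ X}
    (hQ : IsLiePolynomial Q) : IsLiePolynomial (adLift P Q) := by
  induction P using FreeAlgebra.induction generalizing Q with
  | grade0 r =>
    rw [AlgHom.commutes, Module.algebraMap_end_apply]
    exact LieSubalgebra.smul_mem _ r hQ
  | grade1 x =>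
    rw [adLift_ι]
    exact LieSubalgebra.lie_mem _ (LieSubalgebra.subset_lieSpan ⟨x, rfl⟩) hQ
  | mul P₁ P₂ h₁ h₂ =>
    rw [map_mul]
    exact h₁ (h₂ hQ)
  | add P₁ P₂ h₁ h₂ =>
    rw [map_add]
    exact LieSubalgebra.add_mem _ (h₁ hQ) (h₂ hQ)

theorem IsHomogeneous.adLift {p q : ℕ} {P Q : FreeAlgebra ℚ X} (hP : IsHomogeneous p P)
    (hQ : IsHomogeneous q Q) : IsHomogeneous (p + q) (adLift P Q) := by
  induction hP using Submodule.span_induction with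
  | mem _ hw =>
    obtain ⟨l, rfl, rfl⟩ := hw
    induction l with
    | nil => simpa using hQ
    | cons x l ih =>
      simp only [List.map_cons, List.prod_cons, map_mul, Module.End.mul_apply, adLift_ι] at ih ⊢
      rw [List.length_cons, add_right_comm, add_comm _ 1]
      exact (isHomogeneous_ι x).lie ih
  | zero => simpa using isHomogeneous_zero _
  | add _ _ _ _ h₁ h₂ => simpa using h₁.add h₂
  | smul c _ _ h => simpa using h.smul c

theorem rword_cons (x : X) {l : List X} (hl : l ≠ []) : rword (x :: l) = ⁅ι ℚ x, rword l⁆ := by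
  obtain ⟨y, l, rfl⟩ := List.exists_cons_of_ne_nil hl
  rfl

theorem rword_append (u : List X) {v : List X} (hv : v ≠ []) :
    rword (u ++ v) = adLift (u.map (ι ℚ)).prod (rword v) := by
  induction u with
  | nil => simp
  | cons x u ih =>
    rw [List.cons_append, rword_cons x (by simp [hv]), ih, List.map_cons, List.prod_cons,
      map_mul, Module.End.mul_apply, adLift_ι]

theorem isLiePolynomial_rword (l : List X) : IsLiePolynomial (rword l) := by
  induction l with
  | nil => exact LieSubalgebra.zero_mem _
  | cons x l ih =>
    rcases eq_or_ne l [] with rfl | hl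
    · exact LieSubalgebra.subset_lieSpan ⟨x, rfl⟩
    · rw [rword_cons x hl]
      exact LieSubalgebra.lie_mem _ (LieSubalgebra.subset_lieSpan ⟨x, rfl⟩) ih

theorem isHomogeneous_rword (l : List X) : IsHomogeneous l.length (rword l) := by
  induction l with
  | nil => exact isHomogeneous_zero 0
  | cons x l ih =>
    rcases eq_or_ne l [] with rfl | hl
    · exact isHomogeneous_ι x
    · rw [rword_cons x hl, List.length_cons, add_comm]
      exact (isHomogeneous_ι x).lie ih

theorem rmap_basisFreeMonoid (w : FreeMonoid X) :
    rmap X (basisFreeMonoid ℚ X w) = rword w.toList :=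
  (basisFreeMonoid ℚ X).constr_basis ℚ _ w

theorem rmap_ι (x : X) : rmap X (ι ℚ x) = ι ℚ x := by
  rw [← basisFreeMonoid_of, rmap_basisFreeMonoid, basisFreeMonoid_of]
  rfl

theorem isLiePolynomial_rmap (P : FreeAlgebra ℚ X) : IsLiePolynomial (rmap X P) := by
  have hrange : LinearMap.range (rmap X) ≤
      (LieSubalgebra.lieSpan ℚ (FreeAlgebra ℚ X) (Set.range (ι ℚ))).toSubmodule := by
    rw [rmap, Module.Basis.constr_range, Submodule.span_le]
    rintro _ ⟨w, rfl⟩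
    exact isLiePolynomial_rword _
  exact hrange (LinearMap.mem_range_self _ P)

theorem IsHomogeneous.rmap {n : ℕ} {P : FreeAlgebra ℚ X} (hP : IsHomogeneous n P) :
    IsHomogeneous n (rmap X P) := by
  induction hP using Submodule.span_induction with
  | mem _ hw =>
    obtain ⟨l, rfl, rfl⟩ := hw
    dsimp only
    rw [← basisFreeMonoid_ofList, rmap_basisFreeMonoid]
    exact isHomogeneous_rword l
  | zero => simpa using isHomogeneous_zero n
  | add _ _ _ _ h₁ h₂ => simpa using h₁.add h₂
  | smul c _ _ h => simpa using h.smul c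

theorem rmap_mul_of_isHomogeneous {n : ℕ} (hn : 0 < n) (P : FreeAlgebra ℚ X)
    {Q : FreeAlgebra ℚ X} (hQ : IsHomogeneous n Q) :
    rmap X (P * Q) = adLift P (rmap X Q) := by
  induction hQ using Submodule.span_induction generalizing P with
  | mem _ hv =>
    obtain ⟨v, hv, rfl⟩ := hv
    have hv : v ≠ [] := List.ne_nil_of_length_pos (hv ▸ hn)
    suffices rmap X ∘ₗ LinearMap.mulRight ℚ (v.map (ι ℚ)).prod =
        LinearMap.applyₗ (rmap X (v.map (ι ℚ)).prod) ∘ₗ adLift.toLinearMap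
      from LinearMap.congr_fun this P
    refine (basisFreeMonoid ℚ X).ext fun u => ?_
    simp only [LinearMap.comp_apply, LinearMap.mulRight_apply, LinearMap.applyₗ_apply_apply,
      AlgHom.toLinearMap_apply]
    rw [← basisFreeMonoid_ofList, basisFreeMonoid_mul, rmap_basisFreeMonoid, rmap_basisFreeMonoid,
      FreeMonoid.toList_mul, FreeMonoid.toList_ofList, rword_append _ hv, basisFreeMonoid_apply]
  | zero => simp
  | add _ _ _ _ h₁ h₂ => simp [mul_add, h₁, h₂]
  | smul c _ _ h => simp [h]

end RightNormedBracketing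

section DynkinSpechtWever

variable {X : Type*}

/-- Homogeneous Lie polynomials satisfying the Dynkin–Specht–Wever identity. Their span is closed
under brackets, so it contains every Lie polynomial. -/
def dynkinSet (X : Type*) : Set (FreeAlgebra ℚ X) :=
  {Q | ∃ d, 0 < d ∧ IsHomogeneous d Q ∧ IsLiePolynomial Q ∧ rmap X Q = (d : ℚ) • Q}

theorem lie_mem_dynkinSet {P Q : FreeAlgebra ℚ X} (hP : P ∈ dynkinSet X)
    (hQ : Q ∈ dynkinSet X) : ⁅P, Q⁆ ∈ dynkinSet X := by
  obtain ⟨p, hp, hPh, hPL, hPr⟩ := hP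
  obtain ⟨q, hq, hQh, hQL, hQr⟩ := hQ
  refine ⟨p + q, by omega, hPh.lie hQh, LieSubalgebra.lie_mem _ hPL hQL, ?_⟩
  rw [Ring.lie_def, map_sub, rmap_mul_of_isHomogeneous hq P hQh,
    rmap_mul_of_isHomogeneous hp Q hPh, hQr, hPr, map_smul, map_smul, adLift_eq_ad hPL,
    adLift_eq_ad hQL, LieAlgebra.ad_apply, LieAlgebra.ad_apply, ← lie_skew Q P, Ring.lie_def]
  push_cast
  module

theorem lie_mem_span_dynkinSet {P Q : FreeAlgebra ℚ X}
    (hP : P ∈ Submodule.span ℚ (dynkinSet X)) (hQ : Q ∈ Submodule.span ℚ (dynkinSet X)) :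
    ⁅P, Q⁆ ∈ Submodule.span ℚ (dynkinSet X) := by
  induction hP, hQ using Submodule.span_induction₂ with
  | mem_mem P Q hP hQ => exact Submodule.subset_span (lie_mem_dynkinSet hP hQ)
  | zero_left => simp
  | zero_right => simp
  | add_left _ _ _ _ _ _ h₁ h₂ => simpa [add_lie] using Submodule.add_mem _ h₁ h₂
  | add_right _ _ _ _ _ _ h₁ h₂ => simpa [lie_add] using Submodule.add_mem _ h₁ h₂
  | smul_left c _ _ _ _ h => simpa [smul_lie] using Submodule.smul_mem _ c h
  | smul_right c _ _ _ _ h => simpa [lie_smul] using Submodule.smul_mem _ c h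

theorem mem_span_dynkinSet {Q : FreeAlgebra ℚ X} (hQ : IsLiePolynomial Q) :
    Q ∈ Submodule.span ℚ (dynkinSet X) := by
  induction hQ using LieSubalgebra.lieSpan_induction with
  | mem _ hx =>
    obtain ⟨x, rfl⟩ := hx
    exact Submodule.subset_span ⟨1, one_pos, isHomogeneous_ι x,
      LieSubalgebra.subset_lieSpan ⟨x, rfl⟩, by simp [rmap_ι]⟩
  | zero => exact Submodule.zero_mem _
  | add _ _ _ _ hP hQ => exact Submodule.add_mem _ hP hQ
  | smul c _ _ hP => exact Submodule.smul_mem _ c hP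
  | lie _ _ _ _ hP hQ => exact lie_mem_span_dynkinSet hP hQ

theorem homogComponent_of_mem_span_dynkinSet {Q : FreeAlgebra ℚ X}
    (hQ : Q ∈ Submodule.span ℚ (dynkinSet X)) (m : ℕ) :
    IsLiePolynomial (homogComponent m Q) ∧
      rmap X (homogComponent m Q) = (m : ℚ) • homogComponent m Q := by
  induction hQ using Submodule.span_induction with
  | mem _ hP =>
    obtain ⟨d, -, hPh, hPL, hPr⟩ := hP
    rw [homogComponent_of_isHomogeneous hPh]
    split_ifs with hdm
    · exact ⟨hPL, hdm ▸ hPr⟩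
    · exact ⟨LieSubalgebra.zero_mem _, by simp⟩
  | zero =>
    rw [map_zero]
    exact ⟨LieSubalgebra.zero_mem _, by simp⟩
  | add _ _ _ _ h₁ h₂ =>
    rw [map_add]
    exact ⟨LieSubalgebra.add_mem _ h₁.1 h₂.1, by rw [map_add, h₁.2, h₂.2, smul_add]⟩
  | smul c _ _ h =>
    rw [map_smul]
    exact ⟨LieSubalgebra.smul_mem _ c h.1, by rw [map_smul, h.2, smul_comm]⟩

theorem IsLiePolynomial.homogComponent {Q : FreeAlgebra ℚ X} (hQ : IsLiePolynomial Q) (m : ℕ) :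
    IsLiePolynomial (homogComponent m Q) :=
  (homogComponent_of_mem_span_dynkinSet (mem_span_dynkinSet hQ) m).1

theorem IsLiePolynomial.rmap_eq_smul {n : ℕ} {Q : FreeAlgebra ℚ X} (hQ : IsLiePolynomial Q)
    (hn : IsHomogeneous n Q) : rmap X Q = (n : ℚ) • Q := by
  simpa [homogComponent_of_isHomogeneous hn] using
    (homogComponent_of_mem_span_dynkinSet (mem_span_dynkinSet hQ) n).2

end DynkinSpechtWever

section CommutatorWithLetter

variable {X : Type*} (a : X)

theorem adLift_ι_eq_neg_lie {n : ℕ} (hn : 0 < n) {P : FreeAlgebra ℚ X}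
    (hP : IsHomogeneous n P) (hS : IsLiePolynomial ⁅ι ℚ a, P⁆) :
    adLift P (ι ℚ a) = -⁅ι ℚ a, P⁆ := by
  have hS_ad : ⁅⁅ι ℚ a, P⁆, ι ℚ a⁆ = ⁅ι ℚ a, adLift P (ι ℚ a)⁆ := by
    rw [← LieAlgebra.ad_apply ℚ, ← adLift_eq_ad hS, Ring.lie_def (ι ℚ a) P, map_sub, map_mul,
      map_mul, LinearMap.sub_apply, Module.End.mul_apply, Module.End.mul_apply, adLift_ι,
      adLift_ι, lie_self, map_zero, sub_zero]
  have hcomm : ⁅ι ℚ a, adLift P (ι ℚ a) + ⁅ι ℚ a, P⁆⁆ = 0 := by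
    rw [lie_add, ← hS_ad, ← lie_skew (ι ℚ a) ⁅ι ℚ a, P⁆, add_neg_cancel]
  have hW : IsLiePolynomial (adLift P (ι ℚ a) + ⁅ι ℚ a, P⁆) :=
    LieSubalgebra.add_mem _
      (isLiePolynomial_adLift P (LieSubalgebra.subset_lieSpan ⟨a, rfl⟩)) hS
  have hWn : IsHomogeneous (n + 1) (adLift P (ι ℚ a) + ⁅ι ℚ a, P⁆) :=
    (hP.adLift (isHomogeneous_ι a)).add (add_comm 1 n ▸ (isHomogeneous_ι a).lie hP)
  exact eq_neg_of_add_eq_zero_left (hW.eq_zero_of_lie_ι_eq_zero a hWn (by omega) hcomm)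

theorem rmap_eq_smul_of_lie_ι {n : ℕ} (hn : 2 ≤ n) {P : FreeAlgebra ℚ X}
    (hP : IsHomogeneous n P) (hpow : coeffWord P (.ofList (List.replicate n a)) = 0)
    (hS : IsLiePolynomial ⁅ι ℚ a, P⁆) :
    rmap X P = (n : ℚ) • P := by
  have hSn : IsHomogeneous (n + 1) ⁅ι ℚ a, P⁆ := add_comm 1 n ▸ (isHomogeneous_ι a).lie hP
  have hexpand : rmap X (ι ℚ a * P - P * ι ℚ a) = ⁅ι ℚ a, rmap X P⁆ + ⁅ι ℚ a, P⁆ := by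
    rw [map_sub, rmap_mul_of_isHomogeneous (by omega) _ hP,
      rmap_mul_of_isHomogeneous one_pos _ (isHomogeneous_ι a), rmap_ι, adLift_ι,
      adLift_ι_eq_neg_lie a (by omega) hP hS, sub_neg_eq_add]
  have hcomm : ⁅ι ℚ a, rmap X P - (n : ℚ) • P⁆ = 0 := by
    rw [← Ring.lie_def, hS.rmap_eq_smul hSn] at hexpand
    rw [lie_sub, lie_smul, sub_eq_zero, ← add_left_inj ⁅ι ℚ a, P⁆, ← hexpand]
    push_cast
    module
  refine sub_eq_zero.mp (eq_zero_of_commute_ι a (commute_iff_lie_eq.mpr hcomm) fun k => ?_)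
  rcases eq_or_ne k n with rfl | hk
  · rw [coeffWord_eq_coord, map_sub, map_smul, ← coeffWord_eq_coord, ← coeffWord_eq_coord,
      hpow, (isLiePolynomial_rmap P).coeffWord_replicate_eq_zero a (by omega), smul_zero,
      sub_zero]
  · exact (hP.rmap.sub (hP.smul _)).coeffWord_eq_zero (by simpa [FreeMonoid.length] using hk)

theorem IsHomogeneous.isLiePolynomial_of_lie_ι {n : ℕ} {P : FreeAlgebra ℚ X}
    (hP : IsHomogeneous n P) (hpow : coeffWord P (.ofList (List.replicate n a)) = 0)
    (hS : IsLiePolynomial ⁅ι ℚ a, P⁆) : IsLiePolynomial P := by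
  match n, hP, hpow with
  | 0, hP, hpow =>
    have hP0 : P = 0 := ext_coeffWord fun w => by
      rw [coeffWord_eq_coord 0, map_zero]
      rcases eq_or_ne w 1 with rfl | hw
      · exact hpow
      · exact hP.coeffWord_eq_zero (mt FreeMonoid.length_eq_zero.mp hw)
    exact hP0 ▸ LieSubalgebra.zero_mem _
  | 1, hP, _ => exact isLiePolynomial_of_isHomogeneous_one hP
  | n + 2, hP, hpow =>
    rw [← inv_smul_smul₀ (show ((n + 2 : ℕ) : ℚ) ≠ 0 by positivity) P,
      ← rmap_eq_smul_of_lie_ι a (by omega) hP hpow hS]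
    exact LieSubalgebra.smul_mem _ _ (isLiePolynomial_rmap P)

end CommutatorWithLetter

/-- If the coefficient of `a^k` in `P` vanishes for every `k ≥ 0` and `[ι a, P]` is a Lie
polynomial, then `P` is a Lie polynomial. -/
theorem stmt_1 {X : Type*} (a : X) (P : FreeAlgebra ℚ X)
    (hP : ∀ k : ℕ, coeffWord P (FreeMonoid.ofList (List.replicate k a)) = 0)
    (h : IsLiePolynomial ⁅FreeAlgebra.ι ℚ a, P⁆) :
    IsLiePolynomial P := by
  rw [← sum_homogComponent P]
  refine sum_mem fun n _ => (isHomogeneous_homogComponent n P).isLiePolynomial_of_lie_ι a ?_ ?_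
  · rw [coeffWord_homogComponent, if_pos (by simp [FreeMonoid.length])]
    exact hP n
  · rw [← homogComponent_lie_ι]
    exact h.homogComponent (n + 1)
end

section
/- For every Lie polynomial P ∈ ℚ⟨X⟩ there exists a polynomial P̃ ∈ ℚ⟨X⟩ such that P = r(P̃); equivalently, every Lie polynomial lies in the image of the right-normed bracketing map r. -/
attribute [local instance 100] LieRing.ofAssociativeRing

/-!
The right-normed brackets `r(w)` of words span a Lie subalgebra. Indeed `⁅ι x, r(w)⁆ = r(x w)`,
and the Jacobi identity `⁅⁅ι x, r(u)⁆, p⁆ = ⁅ι x, ⁅r(u), p⁆⁆ - ⁅r(u), ⁅ι x, p⁆⁆` shows, by induction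
on the length of `u`, that bracketing with `r(u)` preserves that span. The span contains `ι(X)`,
hence every Lie polynomial, and it is the image of `r`.
-/

open Submodule

theorem lie_mem_of_mem_span_of_mem_span {R L : Type*} [CommRing R] [LieRing L] [LieAlgebra R L]
    {s t : Set L} {N : Submodule R L} (h : ∀ a ∈ s, ∀ b ∈ t, ⁅a, b⁆ ∈ N) {p q : L}
    (hp : p ∈ span R s) (hq : q ∈ span R t) : ⁅p, q⁆ ∈ N := by
  have hpq := apply_mem_map₂ (LieModule.toEnd R L L : L →ₗ[R] Module.End R L) hp hq
  rw [map₂_span_span] at hpq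
  refine span_le.2 ?_ hpq
  rintro _ ⟨a, ha, b, hb, rfl⟩
  simpa using h a ha b hb

namespace FreeAlgebra

variable {X : Type*}

theorem lie_ι_mem_span_range_rword (x : X) {p : FreeAlgebra ℚ X}
    (hp : p ∈ span ℚ (Set.range rword)) : ⁅ι ℚ x, p⁆ ∈ span ℚ (Set.range rword) := by
  refine lie_mem_of_mem_span_of_mem_span ?_ (mem_span_singleton_self (ι ℚ x)) hp
  rintro _ rfl _ ⟨_ | ⟨y, ys⟩, rfl⟩
  · simp [rword]
  · exact subset_span ⟨x :: y :: ys, rfl⟩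

theorem lie_rword_mem_span_range_rword (u : List X) {p : FreeAlgebra ℚ X}
    (hp : p ∈ span ℚ (Set.range rword)) : ⁅rword u, p⁆ ∈ span ℚ (Set.range rword) := by
  induction u generalizing p with
  | nil => simp [rword]
  | cons x u ih =>
    rcases u with _ | ⟨y, ys⟩
    · exact lie_ι_mem_span_range_rword x hp
    · show ⁅⁅ι ℚ x, rword (y :: ys)⁆, p⁆ ∈ _
      rw [lie_lie]
      exact sub_mem (lie_ι_mem_span_range_rword x (ih hp)) (ih (lie_ι_mem_span_range_rword x hp))

noncomputable def rightNormedLieSubalgebra (X : Type*) : LieSubalgebra ℚ (FreeAlgebra ℚ X) where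
  toSubmodule := span ℚ (Set.range rword)
  lie_mem' hp hq := lie_mem_of_mem_span_of_mem_span
    (by rintro _ ⟨u, rfl⟩ q hq; exact lie_rword_mem_span_range_rword u (subset_span hq)) hp hq

theorem lieSpan_range_ι_le_rightNormedLieSubalgebra :
    LieSubalgebra.lieSpan ℚ (FreeAlgebra ℚ X) (Set.range (ι ℚ)) ≤ rightNormedLieSubalgebra X :=
  LieSubalgebra.lieSpan_le.2 <| by
    rintro _ ⟨x, rfl⟩
    exact subset_span ⟨[x], rfl⟩

theorem range_rmap : LinearMap.range (rmap X) = (rightNormedLieSubalgebra X).toSubmodule := by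
  rw [rmap, Module.Basis.constr_range]
  rfl

end FreeAlgebra

/-- Every Lie polynomial lies in the image of the right-normed bracketing map `r`. -/
theorem stmt_7 {X : Type*} (P : FreeAlgebra ℚ X) (hLie : IsLiePolynomial P) :
    ∃ Ptilde : FreeAlgebra ℚ X, P = rmap X Ptilde := by
  obtain ⟨Ptilde, hPtilde⟩ : P ∈ LinearMap.range (rmap X) := by
    rw [FreeAlgebra.range_rmap]
    exact FreeAlgebra.lieSpan_range_ι_le_rightNormedLieSubalgebra hLie
  exact ⟨Ptilde, hPtilde.symm⟩
end
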